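/- Let G=(V,E) be a finite simple graph with a decomposition V = A ∪ B ∪ C satisfying properties (1)–(4). If, additionally, #E(A,C) ≤ min{|A|,|B|}, then |E| ≤ 2·#E(A∪C,B) − (|A|+|B|)/2. -/
import Mathlib


open Finset

variable {V : Type*} [Fintype V] [DecidableEq V]

/-- Number of neighbors of `v` lying in `S`. -/
def degIn (G : SimpleGraph V) [DecidableRel G.Adj] (v : V) (S : Finset V) : ℕ :=
  (S.filter (G.Adj v)).card

/-- Number of edges with one endpoint in `X` and the other in `Y`
(each edge counted once; for `X = Y` this is the number of edges inside `X`). -/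
def eBtw (G : SimpleGraph V) [DecidableRel G.Adj] (X Y : Finset V) : ℕ :=
  (G.edgeFinset.filter (fun e => ∃ x ∈ X, ∃ y ∈ Y, e = s(x, y))).card

lemma degIn_eq_sum (G : SimpleGraph V) [DecidableRel G.Adj] (v : V) (S : Finset V) :
    degIn G v S = ∑ y ∈ S, if G.Adj v y then 1 else 0 := by
  rw [degIn, Finset.card_filter]

lemma sum_degIn_comm (G : SimpleGraph V) [DecidableRel G.Adj] (X Y : Finset V) :
    ∑ x ∈ X, degIn G x Y = ∑ y ∈ Y, degIn G y X := by
  simp only [degIn_eq_sum]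
  rw [Finset.sum_comm]
  exact Finset.sum_congr rfl fun y _ => Finset.sum_congr rfl fun x _ =>
    if_congr (G.adj_comm x y) rfl rfl

lemma eBtw_eq_sum (G : SimpleGraph V) [DecidableRel G.Adj] {X Y : Finset V}
    (h : Disjoint X Y) : eBtw G X Y = ∑ x ∈ X, degIn G x Y := by
  classical
  have hsum : ∑ x ∈ X, degIn G x Y
      = ((X ×ˢ Y).filter fun p => G.Adj p.1 p.2).card := by
    rw [Finset.card_eq_sum_card_fiberwise (f := Prod.fst) (t := X)
      (fun p hp => (Finset.mem_product.mp (Finset.mem_filter.mp hp).1).1)]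
    refine Finset.sum_congr rfl fun x hx => ?_
    rw [degIn]
    apply Finset.card_bij (fun y _ => (x, y))
    · intro y hy
      simp only [Finset.mem_filter, Finset.mem_product] at hy ⊢
      exact ⟨⟨⟨hx, hy.1⟩, hy.2⟩, trivial⟩
    · intro a _ b _ hab
      exact congrArg Prod.snd hab
    · intro p hp
      simp only [Finset.mem_filter, Finset.mem_product] at hp
      obtain ⟨⟨⟨hpX, hpY⟩, hadj⟩, hfst⟩ := hp
      exact ⟨p.2, Finset.mem_filter.mpr ⟨hpY, hfst ▸ hadj⟩, by simp [← hfst]⟩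
  rw [eBtw, hsum]
  refine (Finset.card_bij
    (fun p (_ : p ∈ (X ×ˢ Y).filter fun p => G.Adj p.1 p.2) => s(p.1, p.2)) ?_ ?_ ?_).symm
  · intro p hp
    simp only [Finset.mem_filter, Finset.mem_product] at hp
    simp only [Finset.mem_filter, SimpleGraph.mem_edgeFinset, SimpleGraph.mem_edgeSet]
    exact ⟨hp.2, p.1, hp.1.1, p.2, hp.1.2, rfl⟩
  · intro a ha b hb hab
    simp only [Finset.mem_filter, Finset.mem_product] at ha hb
    rw [Sym2.eq_iff] at hab
    rcases hab with ⟨h1, h2⟩ | ⟨h1, h2⟩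
    · exact Prod.ext h1 h2
    · exact absurd hb.1.2 (Finset.disjoint_left.mp h (h1 ▸ ha.1.1))
  · intro e he
    simp only [Finset.mem_filter, SimpleGraph.mem_edgeFinset, SimpleGraph.mem_edgeSet] at he
    obtain ⟨hadj, x, hx, y, hy, rfl⟩ := he
    refine ⟨(x, y), ?_, rfl⟩
    simp only [Finset.mem_filter, Finset.mem_product]
    exact ⟨⟨hx, hy⟩, hadj⟩

theorem case1_bound (G : SimpleGraph V) [DecidableRel G.Adj]
    (A B C : Finset V)
    (hU : A ∪ B ∪ C = Finset.univ)
    (hAB : Disjoint A B) (hAC : Disjoint A C) (hBC : Disjoint B C)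
    (h1 : ∀ a ∈ A, degIn G a A + max 1 (degIn G a C) ≤ degIn G a B)
    (h2 : ∀ b ∈ B, degIn G b B + max 1 (degIn G b C) ≤ degIn G b A)
    (h3 : ∀ c ∈ C, ∀ c' ∈ C, ¬ G.Adj c c')
    (h4 : ∀ c ∈ C, degIn G c A = degIn G c B)
    (hcase : eBtw G A C ≤ min A.card B.card) :
    (G.edgeFinset.card : ℚ) ≤ 2 * eBtw G (A ∪ C) B - (A.card + B.card) / 2 := by
  classical
  -- degree decomposition
  have hdeg : ∀ v, G.degree v = degIn G v A + degIn G v B + degIn G v C := by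
    intro v
    have hfil : (univ : Finset V).filter (G.Adj v)
        = A.filter (G.Adj v) ∪ B.filter (G.Adj v) ∪ C.filter (G.Adj v) := by
      rw [← hU, Finset.filter_union, Finset.filter_union]
    rw [SimpleGraph.degree, SimpleGraph.neighborFinset_eq_filter, hfil,
      Finset.card_union_of_disjoint, Finset.card_union_of_disjoint]
    · rfl
    · exact Finset.disjoint_filter_filter hAB
    · exact Finset.disjoint_union_left.mpr
        ⟨Finset.disjoint_filter_filter hAC, Finset.disjoint_filter_filter hBC⟩
  have h2E : ∑ v, G.degree v = 2 * G.edgeFinset.card :=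
    G.sum_degrees_eq_twice_card_edges
  -- split the degree sum
  have hsplit : ∑ v, G.degree v
      = (∑ a ∈ A, G.degree a) + (∑ b ∈ B, G.degree b) + (∑ c ∈ C, G.degree c) := by
    rw [← hU, Finset.sum_union, Finset.sum_union hAB]
    exact Finset.disjoint_union_left.mpr ⟨hAC, hBC⟩
  set SAA := ∑ a ∈ A, degIn G a A with hSAA
  set SAB := ∑ a ∈ A, degIn G a B with hSAB
  set SAC := ∑ a ∈ A, degIn G a C with hSAC
  set SBB := ∑ b ∈ B, degIn G b B with hSBB
  set SBC := ∑ b ∈ B, degIn G b C with hSBC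
  have hsymAB : (∑ b ∈ B, degIn G b A) = SAB := (sum_degIn_comm G B A).trans rfl
  have hsymAC : (∑ c ∈ C, degIn G c A) = SAC := (sum_degIn_comm G C A).trans rfl
  have hsymBC : (∑ c ∈ C, degIn G c B) = SBC := (sum_degIn_comm G C B).trans rfl
  have hCC : (∑ c ∈ C, degIn G c C) = 0 := by
    refine Finset.sum_eq_zero fun c hc => ?_
    rw [degIn, Finset.card_eq_zero, Finset.filter_eq_empty_iff]
    exact fun c' hc' => h3 c hc c' hc'
  have hACBC : SAC = SBC := by
    rw [← hsymAC, ← hsymBC]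
    exact Finset.sum_congr rfl fun c hc => h4 c hc
  -- degree sums over the parts
  have hdegsum : 2 * G.edgeFinset.card = SAA + SAB + SAC + (SAB + SBB + SBC) + (SAC + SBC) := by
    rw [← h2E, hsplit]
    simp only [hdeg]
    rw [Finset.sum_add_distrib, Finset.sum_add_distrib, Finset.sum_add_distrib,
      Finset.sum_add_distrib, Finset.sum_add_distrib, Finset.sum_add_distrib,
      hsymAB, hsymAC, hsymBC, hCC]
    ring
  -- hypotheses summed
  have hA : SAA + A.card ≤ SAB := by
    have : ∑ a ∈ A, (degIn G a A + 1) ≤ SAB :=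
      Finset.sum_le_sum fun a ha =>
        le_trans (by have := le_max_left 1 (degIn G a C); omega) (h1 a ha)
    simpa [Finset.sum_add_distrib] using this
  have hB : SBB + B.card ≤ SAB := by
    have : ∑ b ∈ B, (degIn G b B + 1) ≤ ∑ b ∈ B, degIn G b A :=
      Finset.sum_le_sum fun b hb =>
        le_trans (by have := le_max_left 1 (degIn G b C); omega) (h2 b hb)
    rw [hsymAB] at this
    simpa [Finset.sum_add_distrib] using this
  -- eBtw (A ∪ C) B
  have heB : eBtw G (A ∪ C) B = SAB + SBC := by
    rw [eBtw_eq_sum G (Finset.disjoint_union_left.mpr ⟨hAB, hBC.symm⟩),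
      Finset.sum_union hAC, hsymBC]
  -- final nat inequality
  have hnat : 2 * G.edgeFinset.card + A.card + B.card ≤ 4 * eBtw G (A ∪ C) B := by
    rw [heB, hdegsum]
    omega
  have hq : ((2 * G.edgeFinset.card + A.card + B.card : ℕ) : ℚ)
      ≤ ((4 * eBtw G (A ∪ C) B : ℕ) : ℚ) := Nat.cast_le.mpr hnat
  push_cast at hq
  linarith
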